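/- arXiv:2301.02170 — 2 statements merged into one kernel-verified Lean document; each statement's English description precedes it below -/
import Mathlib

section
/- Let Ω ⊂ ℝ³ be open and bounded, let ε_k → 0, and let E ⊂ ℝ³ be a measurable (0,1)³-periodic set with |E ∩ (0,1)³| = θ ∈ (0,1). Suppose f_k, g_k ∈ L¹(Ω) with f_k = g_k almost everywhere on Ω ∩ ε_k E, and suppose f_k → f and g_k → g in L¹(Ω). Then f = g almost everywhere in Ω. -/
open MeasureTheory Filter Topology Pointwise

noncomputable section

/-- The half-open unit cube `(0,1)³` (open version). -/
def unitCube : Set (Fin 3 → ℝ) := Set.univ.pi fun _ => Set.Ioo (0 : ℝ) 1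

/-!
At scale `r`, space is tiled by the cubes `r • (z + [0,1)ⁿ)`, and by periodicity each of them
meets `r • E` in the fraction `ρ = |E ∩ [0,1)ⁿ|` of its volume. The cubes meeting a compact set
`K` cover it and lie in its `r`-thickening, whose measure tends to `|K|`; so, by inner
regularity, `|S ∩ r • E|` is eventually almost `ρ |S|` or more, for every set `S`. The integral
of `|f - g|` over `Ω ∩ ε_k • E` is at most `‖f_k - f‖₁ + ‖g_k - g‖₁ → 0`, so by Chebyshev's
inequality every level set `{δ ≤ |f - g|} ∩ Ω` is null.
-/

open Set Metric ENNReal Function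

section LatticeCells

variable {ι : Type*}

def intCell (z : ι → ℤ) : Set (ι → ℝ) := univ.pi fun i => Ico (z i : ℝ) (z i + 1)

def IsIntPeriodic (E : Set (ι → ℝ)) : Prop :=
  ∀ t : ι → ℤ, ∀ x, x ∈ E ↔ (x + fun i => (t i : ℝ)) ∈ E

lemma mem_intCell_iff {z : ι → ℤ} {x : ι → ℝ} : x ∈ intCell z ↔ ∀ i, ⌊x i⌋ = z i := by
  simp [intCell, Int.floor_eq_iff]

lemma mem_intCell_floor (x : ι → ℝ) : x ∈ intCell fun i => ⌊x i⌋ :=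
  mem_intCell_iff.2 fun _ => rfl

lemma pairwise_disjoint_intCell : Pairwise (Disjoint on intCell (ι := ι)) :=
  fun _ _ hne => disjoint_left.2 fun _ hx hx' =>
    hne <| funext fun i => (mem_intCell_iff.1 hx i).symm.trans (mem_intCell_iff.1 hx' i)

lemma measurableSet_intCell [Countable ι] (z : ι → ℤ) : MeasurableSet (intCell z) :=
  MeasurableSet.univ_pi fun _ => measurableSet_Ico

lemma volume_intCell [Fintype ι] (z : ι → ℤ) : volume (intCell z) = 1 := by
  simp [intCell, volume_pi_pi, Real.volume_Ico]

lemma add_intCast_mem_intCell_iff {x : ι → ℝ} {z : ι → ℤ} :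
    (x + fun i => (z i : ℝ)) ∈ intCell z ↔ x ∈ intCell 0 := by
  simp [mem_intCell_iff, Int.floor_add_intCast]

lemma dist_le_one_of_mem_intCell [Fintype ι] {z : ι → ℤ} {x y : ι → ℝ} (hx : x ∈ intCell z)
    (hy : y ∈ intCell z) : dist x y ≤ 1 := by
  refine (dist_pi_le_iff zero_le_one).2 fun i => ?_
  have hxi := hx i (mem_univ i)
  have hyi := hy i (mem_univ i)
  rw [Real.dist_eq, abs_le]
  constructor <;> linarith [hxi.1, hxi.2, hyi.1, hyi.2]

variable {r : ℝ}

lemma mem_smul_intCell_floor (hr : r ≠ 0) (x : ι → ℝ) :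
    x ∈ r • intCell fun i => ⌊r⁻¹ * x i⌋ :=
  (mem_smul_set_iff_inv_smul_mem₀ hr _ _).2 (mem_intCell_floor _)

lemma dist_le_of_mem_smul_intCell [Fintype ι] (hr : 0 ≤ r) {z : ι → ℤ} {x y : ι → ℝ}
    (hx : x ∈ r • intCell z) (hy : y ∈ r • intCell z) : dist x y ≤ r := by
  obtain ⟨x, hx, rfl⟩ := hx
  obtain ⟨y, hy, rfl⟩ := hy
  rw [dist_smul₀, Real.norm_of_nonneg hr]
  exact mul_le_of_le_one_right hr (dist_le_one_of_mem_intCell hx hy)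

end LatticeCells

section PeriodicSet

variable {ι : Type*} [Fintype ι] {E : Set (ι → ℝ)} {r : ℝ}

lemma volume_inter_intCell_eq (hE : IsIntPeriodic E) (z : ι → ℤ) :
    volume (E ∩ intCell z) = volume (E ∩ intCell 0) := by
  have hpre : (· + fun i => (z i : ℝ)) ⁻¹' (E ∩ intCell z) = E ∩ intCell 0 := by
    ext x
    simp only [mem_preimage, mem_inter_iff, ← hE z x, add_intCast_mem_intCell_iff]
  rw [← hpre, measure_preimage_add_right]

lemma volume_smul_intCell_inter_smul (hE : IsIntPeriodic E)
    (hr : 0 < r) (z : ι → ℤ) :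
    volume (r • intCell z ∩ r • E) = volume (E ∩ intCell 0) * volume (r • intCell z) := by
  rw [← smul_set_inter₀ hr.ne', Measure.addHaar_smul_of_nonneg _ hr.le,
    Measure.addHaar_smul_of_nonneg _ hr.le, inter_comm, volume_inter_intCell_eq hE,
    volume_intCell, mul_one, mul_comm]

lemma volume_biUnion_smul_intCell_inter_smul (hEm : MeasurableSet E) (hE : IsIntPeriodic E)
    (hr : 0 < r) (Z : Set (ι → ℤ)) :
    volume ((⋃ z ∈ Z, r • intCell z) ∩ r • E) =
      volume (E ∩ intCell 0) * volume (⋃ z ∈ Z, r • intCell z) := by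
  have hdisj : Z.PairwiseDisjoint fun z => r • intCell z := fun z _ z' _ hne => by
    rw [onFun, disjoint_iff_inter_eq_empty, ← smul_set_inter₀ hr.ne',
      disjoint_iff_inter_eq_empty.1 (pairwise_disjoint_intCell hne), smul_set_empty]
  have hmeas : ∀ z ∈ Z, MeasurableSet (r • intCell z) :=
    fun z _ => (measurableSet_intCell z).const_smul₀ r
  rw [iUnion₂_inter, measure_biUnion Z.to_countable
      (hdisj.mono fun _ => inter_subset_left) fun z hz => (hmeas z hz).inter (hEm.const_smul₀ r),
    measure_biUnion Z.to_countable hdisj hmeas, ← ENNReal.tsum_mul_left]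
  exact tsum_congr fun z => volume_smul_intCell_inter_smul hE hr z

lemma mul_volume_le_volume_cthickening_inter_smul (hEm : MeasurableSet E)
    (hE : IsIntPeriodic E) (hr : 0 < r) (K : Set (ι → ℝ)) :
    volume (E ∩ intCell 0) * volume K ≤ volume (cthickening r K ∩ r • E) := by
  set Z : Set (ι → ℤ) := {z | (r • intCell z ∩ K).Nonempty}
  have hKZ : K ⊆ ⋃ z ∈ Z, r • intCell z := fun x hx =>
    mem_biUnion ⟨x, mem_smul_intCell_floor hr.ne' x, hx⟩ (mem_smul_intCell_floor hr.ne' x)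
  have hZK : (⋃ z ∈ Z, r • intCell z) ⊆ cthickening r K :=
    iUnion₂_subset fun _ ⟨y, hy, hyK⟩ x hx =>
      mem_cthickening_of_dist_le x y r K hyK (dist_le_of_mem_smul_intCell hr.le hx hy)
  calc volume (E ∩ intCell 0) * volume K
      ≤ volume (E ∩ intCell 0) * volume (⋃ z ∈ Z, r • intCell z) := by gcongr
    _ = volume ((⋃ z ∈ Z, r • intCell z) ∩ r • E) :=
      (volume_biUnion_smul_intCell_inter_smul hEm hE hr Z).symm
    _ ≤ volume (cthickening r K ∩ r • E) := by gcongr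

end PeriodicSet

section Density

variable {ι : Type*} [Fintype ι] {E : Set (ι → ℝ)}

lemma volume_inter_intCell_zero_ne_top : volume (E ∩ intCell 0) ≠ ∞ :=
  ((measure_mono inter_subset_right).trans_eq (volume_intCell 0)).trans_lt one_lt_top |>.ne

lemma eventually_lt_volume_inter_smul_of_isCompact (hEm : MeasurableSet E)
    (hE : IsIntPeriodic E) {K : Set (ι → ℝ)}
    (hK : IsCompact K) {c : ℝ≥0∞} (hc : c < volume (E ∩ intCell 0) * volume K) :
    ∀ᶠ r : ℝ in 𝓝[>] 0, c < volume (K ∩ r • E) := by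
  obtain ⟨η, hη, hcη⟩ := ENNReal.lt_iff_exists_add_pos_lt.1 hc
  have hKfin : volume K ≠ ∞ := hK.measure_lt_top.ne
  have hthick : ∀ᶠ r in 𝓝 0, volume (cthickening r K) < volume K + η :=
    (tendsto_measure_cthickening_of_isCompact hK).eventually
      (gt_mem_nhds (ENNReal.lt_add_right hKfin (by simpa using hη.ne')))
  filter_upwards [nhdsWithin_le_nhds hthick, self_mem_nhdsWithin] with r hr (hr0 : 0 < r)
  have hcollar : volume (cthickening r K \ K) < η :=
    measure_sdiff_lt_of_lt_add hK.measurableSet.nullMeasurableSet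
      (self_subset_cthickening K) hKfin hr
  refine (ENNReal.add_lt_add_iff_right (coe_ne_top (r := η))).1 ?_
  calc c + η < volume (E ∩ intCell 0) * volume K := hcη
    _ ≤ volume (cthickening r K ∩ r • E) :=
      mul_volume_le_volume_cthickening_inter_smul hEm hE hr0 K
    _ ≤ volume ((K ∩ r • E) ∪ (cthickening r K \ K)) := by
      refine measure_mono fun x ⟨hx, hxE⟩ => ?_
      by_cases hxK : x ∈ K
      exacts [Or.inl ⟨hxK, hxE⟩, Or.inr ⟨hx, hxK⟩]
    _ ≤ volume (K ∩ r • E) + volume (cthickening r K \ K) := measure_union_le _ _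
    _ ≤ volume (K ∩ r • E) + η := by gcongr

theorem eventually_lt_volume_inter_smul (hEm : MeasurableSet E)
    (hE : IsIntPeriodic E) {S : Set (ι → ℝ)}
    {c : ℝ≥0∞} (hc : c < volume (E ∩ intCell 0) * volume S) :
    ∀ᶠ r : ℝ in 𝓝[>] 0, c < volume (S ∩ r • E) := by
  have hρ0 : volume (E ∩ intCell 0) ≠ 0 := by
    rintro h
    simp [h] at hc
  have hdiv : ∀ a, c / volume (E ∩ intCell 0) < a ↔ c < volume (E ∩ intCell 0) * a := fun a => by
    rw [ENNReal.div_lt_iff (Or.inl hρ0) (Or.inl volume_inter_intCell_zero_ne_top), mul_comm]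
  obtain ⟨K, hKS, hK, hcK⟩ := (measurableSet_toMeasurable volume S).exists_lt_isCompact
    (by rwa [measure_toMeasurable, hdiv])
  filter_upwards [eventually_lt_volume_inter_smul_of_isCompact hEm hE hK ((hdiv _).1 hcK)]
    with r hr
  calc c < volume (K ∩ r • E) := hr
    _ ≤ volume (toMeasurable volume S ∩ r • E) := by gcongr
    _ = volume (S ∩ r • E) :=
      Measure.measure_toMeasurable_inter_of_sFinite (hEm.const_smul₀ r) S

end Density

lemma setIntegral_abs_sub_le_of_ae_eq {α : Type*} [MeasurableSpace α] {μ : Measure α}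
    {A Ω : Set α} (hAΩ : A ⊆ Ω) {f g F G : α → ℝ} (hf : IntegrableOn f Ω μ)
    (hg : IntegrableOn g Ω μ) (hF : IntegrableOn F Ω μ) (hG : IntegrableOn G Ω μ)
    (hfg : ∀ᵐ x ∂μ.restrict A, f x = g x) :
    ∫ x in A, |F x - G x| ∂μ ≤ (∫ x in Ω, |f x - F x| ∂μ) + ∫ x in Ω, |g x - G x| ∂μ := by
  have hint : IntegrableOn (fun x => |f x - F x| + |g x - G x|) Ω μ :=
    (hf.sub hF).abs.add (hg.sub hG).abs
  calc ∫ x in A, |F x - G x| ∂μ ≤ ∫ x in A, (|f x - F x| + |g x - G x|) ∂μ := by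
        refine integral_mono_ae (IntegrableOn.mono_set (hF.sub hG).abs hAΩ) (hint.mono_set hAΩ) ?_
        filter_upwards [hfg] with x hx
        calc |F x - G x| ≤ |F x - f x| + |f x - G x| := abs_sub_le _ _ _
          _ = |f x - F x| + |g x - G x| := by rw [abs_sub_comm, hx]
    _ ≤ ∫ x in Ω, (|f x - F x| + |g x - G x|) ∂μ :=
        setIntegral_mono_set hint (ae_of_all _ fun _ => by positivity) hAΩ.eventuallyLE
    _ = (∫ x in Ω, |f x - F x| ∂μ) + ∫ x in Ω, |g x - G x| ∂μ :=
        integral_add (hf.sub hF).abs (hg.sub hG).abs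

section Limits

variable {ι : Type*} [Fintype ι] {E Ω : Set (ι → ℝ)} {h : (ι → ℝ) → ℝ} {ε : ℕ → ℝ}

lemma volume_inter_setOf_le_eq_zero (hEm : MeasurableSet E)
    (hE : IsIntPeriodic E)
    (hρ : volume (E ∩ intCell 0) ≠ 0) (hΩ : MeasurableSet Ω) (hh : IntegrableOn h Ω)
    (hnn : ∀ x, 0 ≤ h x) (hε : Tendsto ε atTop (𝓝[>] 0))
    (hT : Tendsto (fun k => ∫ x in Ω ∩ ε k • E, h x) atTop (𝓝 0)) {δ : ℝ} (hδ : 0 < δ) :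
    volume ({x | δ ≤ h x} ∩ Ω) = 0 := by
  set S := {x | δ ≤ h x} ∩ Ω
  have hSfin : volume S ≠ ∞ := by
    rw [← Measure.restrict_apply' hΩ]
    exact (hh.measure_ge_lt_top hδ).ne
  by_contra hS
  obtain ⟨c, hc0, hcS⟩ := ENNReal.lt_iff_exists_nnreal_btwn.1
    (pos_iff_ne_zero.2 (mul_ne_zero hρ hS))
  have hmarkov : ∀ k, δ * volume.real (S ∩ ε k • E) ≤ ∫ x in Ω ∩ ε k • E, h x := fun k => by
    have := mul_meas_ge_le_integral_of_nonneg (ae_of_all _ hnn)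
      (hh.mono_set (inter_subset_left (t := ε k • E))) δ
    rwa [measureReal_restrict_apply' (hΩ.inter (hEm.const_smul₀ _)), ← inter_assoc] at this
  have hlower : ∀ᶠ k in atTop, δ * c ≤ ∫ x in Ω ∩ ε k • E, h x := by
    filter_upwards [hε.eventually (eventually_lt_volume_inter_smul hEm hE hcS)] with k hk
    refine le_trans ?_ (hmarkov k)
    gcongr
    exact ENNReal.toReal_mono (measure_ne_top_of_subset inter_subset_left hSfin) hk.le
  have hle : δ * c ≤ 0 := ge_of_tendsto hT hlower
  exact (mul_pos hδ (by exact_mod_cast hc0)).not_ge hle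

theorem ae_eq_zero_of_tendsto_setIntegral_inter_smul (hEm : MeasurableSet E)
    (hE : IsIntPeriodic E)
    (hρ : volume (E ∩ intCell 0) ≠ 0) (hΩ : MeasurableSet Ω) (hh : IntegrableOn h Ω)
    (hnn : ∀ x, 0 ≤ h x) (hε : Tendsto ε atTop (𝓝[>] 0))
    (hT : Tendsto (fun k => ∫ x in Ω ∩ ε k • E, h x) atTop (𝓝 0)) :
    ∀ᵐ x ∂volume.restrict Ω, h x = 0 := by
  have hlevel : ∀ n : ℕ, ∀ᵐ x ∂volume.restrict Ω, h x < 1 / (n + 1) := fun n => by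
    rw [ae_iff, Measure.restrict_apply' hΩ]
    simpa only [not_lt] using
      volume_inter_setOf_le_eq_zero hEm hE hρ hΩ hh hnn hε hT (δ := 1 / (n + 1)) (by positivity)
  filter_upwards [ae_all_iff.2 hlevel] with x hx
  refine le_antisymm (le_of_forall_pos_lt_add fun η hη => ?_) (hnn x)
  obtain ⟨n, hn⟩ := exists_nat_one_div_lt hη
  linarith [hx n]

end Limits

lemma unitCube_subset_intCell_zero : unitCube ⊆ intCell 0 := fun _ hx i _ =>
  ⟨by simpa using (hx i (mem_univ i)).1.le, by simpa using (hx i (mem_univ i)).2⟩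

theorem limits_agree_of_eq_on_periodic_set_general
    (Ω : Set (Fin 3 → ℝ)) (hΩo : IsOpen Ω)
    (ε : ℕ → ℝ) (hεpos : ∀ k, 0 < ε k) (hε : Tendsto ε atTop (𝓝 0))
    (E : Set (Fin 3 → ℝ)) (hEm : MeasurableSet E)
    (hEper : ∀ t : Fin 3 → ℤ, ∀ x, x ∈ E ↔ (x + fun i => (t i : ℝ)) ∈ E)
    (θ : ℝ) (hθ : 0 < θ)
    (hEθ : volume (E ∩ unitCube) = ENNReal.ofReal θ)
    (f g : ℕ → (Fin 3 → ℝ) → ℝ) (flim glim : (Fin 3 → ℝ) → ℝ)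
    (hfint : ∀ k, IntegrableOn (f k) Ω) (hgint : ∀ k, IntegrableOn (g k) Ω)
    (hflim : IntegrableOn flim Ω) (hglim : IntegrableOn glim Ω)
    (heq : ∀ k, ∀ᵐ x ∂(volume.restrict (Ω ∩ ε k • E)), f k x = g k x)
    (hfconv : Tendsto (fun k => ∫ x in Ω, |f k x - flim x|) atTop (𝓝 0))
    (hgconv : Tendsto (fun k => ∫ x in Ω, |g k x - glim x|) atTop (𝓝 0)) :
    ∀ᵐ x ∂(volume.restrict Ω), flim x = glim x := by
  have hρ : volume (E ∩ intCell 0) ≠ 0 := by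
    refine (lt_of_lt_of_le ?_ (measure_mono (inter_subset_inter_right E
      unitCube_subset_intCell_zero))).ne'
    rwa [hEθ, ENNReal.ofReal_pos]
  have hT : Tendsto (fun k => ∫ x in Ω ∩ ε k • E, |flim x - glim x|) atTop (𝓝 0) := by
    refine squeeze_zero (fun k => integral_nonneg fun x => abs_nonneg _)
      (fun k => setIntegral_abs_sub_le_of_ae_eq inter_subset_left (hfint k) (hgint k) hflim hglim
        (heq k)) ?_
    simpa using hfconv.add hgconv
  filter_upwards [ae_eq_zero_of_tendsto_setIntegral_inter_smul hEm hEper hρ hΩo.measurableSet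
    (hflim.sub hglim).abs (fun x => abs_nonneg _) (tendsto_nhdsWithin_iff.2 ⟨hε, .of_forall hεpos⟩)
    hT] with x hx
  exact sub_eq_zero.1 (abs_eq_zero.1 hx)

/-- Uniqueness of limits in the sense of extensions: if `f_k = g_k` a.e. on `Ω ∩ ε_k E`
for a periodic set `E` of positive cell density, and `f_k → f`, `g_k → g` in `L¹(Ω)`,
then `f = g` a.e. in `Ω`. -/
theorem limits_agree_of_eq_on_periodic_set
    (Ω : Set (Fin 3 → ℝ)) (hΩo : IsOpen Ω) (hΩb : Bornology.IsBounded Ω)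
    (ε : ℕ → ℝ) (hεpos : ∀ k, 0 < ε k) (hε : Tendsto ε atTop (𝓝 0))
    (E : Set (Fin 3 → ℝ)) (hEm : MeasurableSet E)
    (hEper : ∀ t : Fin 3 → ℤ, ∀ x, x ∈ E ↔ (x + fun i => (t i : ℝ)) ∈ E)
    (θ : ℝ) (hθ : 0 < θ) (hθ1 : θ < 1)
    (hEθ : volume (E ∩ unitCube) = ENNReal.ofReal θ)
    (f g : ℕ → (Fin 3 → ℝ) → ℝ) (flim glim : (Fin 3 → ℝ) → ℝ)
    (hfint : ∀ k, IntegrableOn (f k) Ω) (hgint : ∀ k, IntegrableOn (g k) Ω)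
    (hflim : IntegrableOn flim Ω) (hglim : IntegrableOn glim Ω)
    (heq : ∀ k, ∀ᵐ x ∂(volume.restrict (Ω ∩ ε k • E)), f k x = g k x)
    (hfconv : Tendsto (fun k => ∫ x in Ω, |f k x - flim x|) atTop (𝓝 0))
    (hgconv : Tendsto (fun k => ∫ x in Ω, |g k x - glim x|) atTop (𝓝 0)) :
    ∀ᵐ x ∂(volume.restrict Ω), flim x = glim x :=
  limits_agree_of_eq_on_periodic_set_general Ω hΩo ε hεpos hε E hEm hEper θ hθ hEθ f g flim glim
    hfint hgint hflim hglim heq hfconv hgconv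
end
end

section
/- Let X be a measurable space, Y a separable metric space, and S a multifunction assigning to each x ∈ X a nonempty open subset S(x) ⊂ Y. Assume that for every y ∈ Y the set {x ∈ X : y ∈ S(x)} is measurable. Then S admits a measurable selection: there exists a measurable s : X → Y with s(x) ∈ S(x) for all x ∈ X. -/
theorem exists_measurable_selection_of_seq {X Y : Type*} [MeasurableSpace X] [MeasurableSpace Y]
    (S : X → Set Y) (u : ℕ → Y) (hu : ∀ x, ∃ n, u n ∈ S x)
    (hmeas : ∀ n, MeasurableSet {x | u n ∈ S x}) :
    ∃ s : X → Y, Measurable s ∧ ∀ x, s x ∈ S x := by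
  classical
  exact ⟨fun x => u (Nat.find (hu x)), measurable_from_top.comp (measurable_find hu hmeas),
    fun x => Nat.find_spec (hu x)⟩

theorem measurable_selection_general
    {X : Type*} [MeasurableSpace X]
    {Y : Type*} [MetricSpace Y] [TopologicalSpace.SeparableSpace Y]
    [MeasurableSpace Y]
    (S : X → Set Y)
    (hne : ∀ x, (S x).Nonempty)
    (hopen : ∀ x, IsOpen (S x))
    (hmeas : ∀ y : Y, MeasurableSet {x : X | y ∈ S x}) :
    ∃ s : X → Y, Measurable s ∧ ∀ x, s x ∈ S x := by
  cases isEmpty_or_nonempty X with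
  | inl hX => exact ⟨hX.elim, measurable_of_empty _, hX.elim⟩
  | inr hX =>
    have : Nonempty Y := (hne hX.some).nonempty
    obtain ⟨u, hu⟩ := TopologicalSpace.exists_dense_seq Y
    exact exists_measurable_selection_of_seq S u
      (fun x => hu.exists_mem_open (hopen x) (hne x)) (fun n => hmeas (u n))

/-- Measurable selection criterion (Fonseca–Kružík, Lemma 3.10): a multifunction `S`
with nonempty open values in a separable metric space `Y`, such that
`{x : y ∈ S(x)}` is measurable for every `y`, admits a measurable selection. -/
theorem measurable_selection
    {X : Type*} [MeasurableSpace X]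
    {Y : Type*} [MetricSpace Y] [TopologicalSpace.SeparableSpace Y]
    [MeasurableSpace Y] [BorelSpace Y]
    (S : X → Set Y)
    (hne : ∀ x, (S x).Nonempty)
    (hopen : ∀ x, IsOpen (S x))
    (hmeas : ∀ y : Y, MeasurableSet {x : X | y ∈ S x}) :
    ∃ s : X → Y, Measurable s ∧ ∀ x, s x ∈ S x :=
  measurable_selection_general S hne hopen hmeas
end
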